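/- arXiv:1010.1184 — 4 statements merged into one kernel-verified Lean document; each statement's English description precedes it below -/
import Mathlib

section
/- Let N ≥ 3 and let A be a Ptolemy diagram of the N-gon. Then nc(nc A) = A, i.e. a diagonal of the N-gon belongs to A if and only if it crosses no diagonal of nc A. -/
/-- An edge of the `N`-gon: a set `{v, v+1}` of two neighbouring vertices. -/
def IsEdge (N : ℕ) (e : Finset (ZMod N)) : Prop :=
  ∃ v : ZMod N, e = {v, v + 1}

/-- A diagonal of the `N`-gon: a 2-element subset of `ZMod N` which is not an edge. -/
def IsDiag (N : ℕ) (d : Finset (ZMod N)) : Prop :=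
  d.card = 2 ∧ ¬ IsEdge N d

/-- `ArcBtw N a c b` means that `c` lies strictly on the arc from `a` to `b`
(going around the polygon in the positive direction). -/
def ArcBtw (N : ℕ) (a c b : ZMod N) : Prop :=
  0 < (c - a).val ∧ (c - a).val < (b - a).val

/-- Two diagonals cross if their endpoints are pairwise distinct and occur in the
cyclic order `a₁, b₁, a₂, b₂` around the polygon: i.e. exactly one of `b₁, b₂` lies
strictly on each of the two arcs determined by `a₁` and `a₂`. -/
def Cross (N : ℕ) (d e : Finset (ZMod N)) : Prop :=
  ∃ a₁ a₂ b₁ b₂ : ZMod N, d = {a₁, a₂} ∧ e = {b₁, b₂} ∧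
    ArcBtw N a₁ b₁ a₂ ∧ ArcBtw N a₂ b₂ a₁

/-- `nc N A` is the set of all diagonals of the `N`-gon crossing no diagonal in `A`. -/
def nc (N : ℕ) (A : Set (Finset (ZMod N))) : Set (Finset (ZMod N)) :=
  { d | IsDiag N d ∧ ∀ e ∈ A, ¬ Cross N d e }

/-- A Ptolemy diagram: a set of diagonals such that whenever `{a₁,a₂}` and `{b₁,b₂}`
are crossing diagonals in `A`, each of the four connecting sets which is a diagonal
also belongs to `A`. -/
def IsPtolemy (N : ℕ) (A : Set (Finset (ZMod N))) : Prop :=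
  (∀ d ∈ A, IsDiag N d) ∧
  ∀ a₁ a₂ b₁ b₂ : ZMod N,
    ({a₁, a₂} : Finset (ZMod N)) ∈ A → ({b₁, b₂} : Finset (ZMod N)) ∈ A →
    Cross N {a₁, a₂} {b₁, b₂} →
    ∀ i ∈ ({a₁, a₂} : Finset (ZMod N)), ∀ j ∈ ({b₁, b₂} : Finset (ZMod N)),
      IsDiag N {i, j} → ({i, j} : Finset (ZMod N)) ∈ A

lemma pair_eq_cases {α : Type*} [DecidableEq α] {a b c d : α}
    (h : ({a, b} : Finset α) = {c, d}) : (a = c ∧ b = d) ∨ (a = d ∧ b = c) := by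
  have ha : a ∈ ({c, d} : Finset α) := by rw [← h]; simp
  have hb : b ∈ ({c, d} : Finset α) := by rw [← h]; simp
  have hc : c ∈ ({a, b} : Finset α) := by rw [h]; simp
  have hd : d ∈ ({a, b} : Finset α) := by rw [h]; simp
  simp only [Finset.mem_insert, Finset.mem_singleton] at ha hb hc hd
  rcases ha with rfl | rfl <;> rcases hb with rfl | rfl <;> tauto

lemma sub_val_or {N : ℕ} [NeZero N] (a c : ZMod N) :
    (c - a).val + a.val = c.val ∨ (c - a).val + a.val = c.val + N := by
  have haN : a.val ≤ N := le_of_lt (ZMod.val_lt a)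
  have h1 : (c - a) = ((c.val + (N - a.val) : ℕ) : ZMod N) := by
    push_cast [Nat.cast_sub haN]
    simp [ZMod.natCast_val, ZMod.cast_id, sub_eq_add_neg]
  rw [h1, ZMod.val_natCast]
  have hcN := ZMod.val_lt c
  rcases le_or_gt a.val c.val with h | h
  · left
    have : (c.val + (N - a.val)) = (c.val - a.val) + N := by omega
    rw [this, Nat.add_mod_right, Nat.mod_eq_of_lt (by omega)]
    omega
  · right
    rw [Nat.mod_eq_of_lt (by omega)]
    omega

lemma arcBtw_nat {N : ℕ} [NeZero N] {i j k : ℕ} (hi : i < N) (hj : j < N) (hk : k < N) :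
    ArcBtw N (i : ZMod N) (j : ZMod N) (k : ZMod N) ↔
      ((i < j ∧ j < k) ∨ (k < i ∧ i < j) ∨ (j < k ∧ k < i)) := by
  unfold ArcBtw
  have h1 := sub_val_or (N := N) (i : ZMod N) (j : ZMod N)
  have h2 := sub_val_or (N := N) (i : ZMod N) (k : ZMod N)
  have b1 := ZMod.val_lt ((j : ZMod N) - (i : ZMod N))
  have b2 := ZMod.val_lt ((k : ZMod N) - (i : ZMod N))
  rw [ZMod.val_natCast_of_lt hi, ZMod.val_natCast_of_lt hj] at h1
  rw [ZMod.val_natCast_of_lt hi, ZMod.val_natCast_of_lt hk] at h2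
  omega

lemma cross_symm {N : ℕ} [NeZero N] {d e : Finset (ZMod N)} (h : Cross N d e) :
    Cross N e d := by
  obtain ⟨a₁, a₂, b₁, b₂, hd, he, h3, h4⟩ := h
  refine ⟨b₁, b₂, a₂, a₁, he, by rw [hd, Finset.pair_comm], ?_, ?_⟩ <;>
  · unfold ArcBtw at *
    have s1 := sub_val_or (N := N) a₁ b₁
    have s2 := sub_val_or (N := N) a₁ a₂
    have s3 := sub_val_or (N := N) a₂ b₂
    have s4 := sub_val_or (N := N) a₂ a₁
    have s5 := sub_val_or (N := N) b₁ a₂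
    have s6 := sub_val_or (N := N) b₁ b₂
    have s7 := sub_val_or (N := N) b₂ a₁
    have s8 := sub_val_or (N := N) b₂ b₁
    have v1 := ZMod.val_lt (b₁ - a₁); have v2 := ZMod.val_lt (a₂ - a₁)
    have v3 := ZMod.val_lt (b₂ - a₂); have v4 := ZMod.val_lt (a₁ - a₂)
    have v5 := ZMod.val_lt (a₂ - b₁); have v6 := ZMod.val_lt (b₂ - b₁)
    have v7 := ZMod.val_lt (a₁ - b₂); have v8 := ZMod.val_lt (b₁ - b₂)
    have w1 := ZMod.val_lt a₁; have w2 := ZMod.val_lt a₂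
    have w3 := ZMod.val_lt b₁; have w4 := ZMod.val_lt b₂
    omega

/-- If `A` is a Ptolemy diagram of the `N`-gon (`N ≥ 3`), then `nc (nc A) = A`. -/
theorem nc_nc_of_isPtolemy {N : ℕ} (hN : 3 ≤ N)
    (A : Set (Finset (ZMod N))) (hA : IsPtolemy N A) :
    nc N (nc N A) = A := by
  haveI : NeZero N := ⟨by omega⟩
  ext d
  simp only [nc, Set.mem_setOf_eq]
  constructor
  · rintro ⟨hdDiag, hdnc⟩
    by_contra hdA
    obtain ⟨u, v, huv, hduv⟩ := Finset.card_eq_two.mp hdDiag.1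
    set V : ℕ → ZMod N := fun k => u + (k : ZMod N) with hV
    set m := (v - u).val with hm
    have hmN : m < N := ZMod.val_lt _
    have hV0 : V 0 = u := by simp [hV]
    have hVm : V m = v := by
      simp only [hV, hm]
      rw [ZMod.natCast_val, ZMod.cast_id]
      ring
    have hdVV : d = {V 0, V m} := by rw [hV0, hVm]; exact hduv
    have hVsucc : ∀ k : ℕ, V (k + 1) = V k + 1 := by
      intro k; simp only [hV]; push_cast; ring
    have hVN : V N = V 0 := by simp [hV, ZMod.natCast_self]
    have hVinj : ∀ {i j : ℕ}, i < N → j < N → V i = V j → i = j := by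
      intro i j hi hj h
      have h2 : (i : ZMod N) = (j : ZMod N) := by
        have := h
        simp only [hV] at this
        exact add_left_cancel this
      have := congrArg ZMod.val h2
      rwa [ZMod.val_natCast_of_lt hi, ZMod.val_natCast_of_lt hj] at this
    have harc : ∀ i j k : ℕ, i < N → j < N → k < N →
        (ArcBtw N (V i) (V j) (V k) ↔
          ((i < j ∧ j < k) ∨ (k < i ∧ i < j) ∨ (j < k ∧ k < i))) := by
      intro i j k hi hj hk
      have heq : ArcBtw N (V i) (V j) (V k) ↔
          ArcBtw N (i : ZMod N) (j : ZMod N) (k : ZMod N) := by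
        unfold ArcBtw
        simp only [hV, add_sub_add_left_eq_sub]
      rw [heq, arcBtw_nat hi hj hk]
    have hdiagV : ∀ i j : ℕ, i < N → j < N → i < j →
        (IsDiag N {V i, V j} ↔ (i + 1 < j ∧ j + 1 < i + N)) := by
      intro i j hi hj hij
      constructor
      · rintro ⟨-, hne⟩
        constructor
        · by_contra hcon
          have hj1 : j = i + 1 := by omega
          exact hne ⟨V i, by rw [hj1, hVsucc]⟩
        · by_contra hcon
          have hi0 : i = 0 ∧ j = N - 1 := by omega
          obtain ⟨rfl, hj'⟩ := hi0
          refine hne ⟨V j, ?_⟩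
          have hsu : V j + 1 = V 0 := by
            rw [← hVsucc, (by omega : j + 1 = N), hVN]
          rw [Finset.pair_comm, hsu]
      · rintro ⟨h1, h2⟩
        refine ⟨Finset.card_pair (fun h => by have := hVinj hi hj h; omega), ?_⟩
        rintro ⟨w, hw⟩
        rcases pair_eq_cases hw with ⟨hwa, hwb⟩ | ⟨hwa, hwb⟩
        · have hj2 : V j = V (i + 1) := by rw [hVsucc, hwb, hwa]
          have := hVinj hj (by omega) hj2
          omega
        · have hji : V i = V (j + 1) := by rw [hVsucc, hwa, hwb]
          rcases Nat.lt_or_ge (j + 1) N with hc | hc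
          · have := hVinj hi hc hji; omega
          · have hjN : j + 1 = N := by omega
            rw [hjN, hVN] at hji
            have := hVinj hi (by omega) hji
            omega
    have hdDiagV : IsDiag N {V 0, V m} := hdVV ▸ hdDiag
    have hm0 : 0 < m := by
      rcases Nat.eq_zero_or_pos m with h | h
      · exfalso
        apply huv
        have hvz : v - u = 0 := by
          rw [← ZMod.val_eq_zero, ← hm, h]
        exact (sub_eq_zero.mp hvz).symm
      · exact h
    obtain ⟨hm1, hm2⟩ := (hdiagV 0 m (by omega) hmN hm0).mp hdDiagV
    -- hm1 : 0 + 1 < m, hm2 : m + 1 < 0 + N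
    obtain ⟨p, hp1, hpm, hPmin, hPmem⟩ :
        ∃ p, 1 ≤ p ∧ p ≤ m - 1 ∧
          (∀ x, 0 < x → x < m → {V x, V m} ∈ A → p ≤ x) ∧
          (p = m - 1 ∨ {V p, V m} ∈ A) := by
      by_cases hS : {x : ℕ | 0 < x ∧ x < m ∧ {V x, V m} ∈ A}.Nonempty
      · have hmem := Nat.sInf_mem hS
        exact ⟨_, hmem.1, by have := hmem.2.1; omega, fun x hx1 hx2 hx3 => Nat.sInf_le ⟨hx1, hx2, hx3⟩,
          Or.inr hmem.2.2⟩
      · refine ⟨m - 1, by omega, le_refl _, fun x hx1 hx2 hx3 => ?_, Or.inl rfl⟩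
        exact absurd ⟨x, hx1, hx2, hx3⟩ hS
    obtain ⟨q, hq1, hqn, hQmax, hQmem⟩ :
        ∃ q, m + 1 ≤ q ∧ q ≤ N - 1 ∧
          (∀ y, m < y → y < N → {V m, V y} ∈ A → y ≤ q) ∧
          (q = m + 1 ∨ {V m, V q} ∈ A) := by
      by_cases hT : {y : ℕ | m < y ∧ y < N ∧ {V m, V y} ∈ A}.Nonempty
      · have hbdd : BddAbove {y : ℕ | m < y ∧ y < N ∧ {V m, V y} ∈ A} :=
          ⟨N, fun y hy => le_of_lt hy.2.1⟩
        have hmem := Nat.sSup_mem hT hbdd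
        exact ⟨_, hmem.1, by have := hmem.2.1; omega, fun y hy1 hy2 hy3 => le_csSup hbdd ⟨hy1, hy2, hy3⟩,
          Or.inr hmem.2.2⟩
      · refine ⟨m + 1, le_refl _, by omega, fun y hy1 hy2 hy3 => ?_, Or.inl rfl⟩
        exact absurd ⟨y, hy1, hy2, hy3⟩ hT
    have hpN : p < N := by omega
    have hqN' : q < N := by omega
    have heDiag : IsDiag N {V p, V q} :=
      (hdiagV p q hpN hqN' (by omega)).mpr ⟨by omega, by omega⟩
    -- the key claim: {V p, V q} crosses nothing in A
    have claim : ∀ x y : ℕ, x < y → y < N → {V x, V y} ∈ A →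
        ¬ Cross N {V p, V q} {V x, V y} := by
      intro x y hxy hyN haxy hcr
      have hxN : x < N := lt_trans hxy hyN
      obtain ⟨hx1, hy1⟩ := (hdiagV x y hxN hyN hxy).mp (hA.1 _ haxy)
      -- scenario lemmas
      have scen1 : p < x → x < q → q < y → False := by
        intro h1 h2 h3
        rcases lt_trichotomy x m with hxm | hxm | hxm
        · have hpmA : {V p, V m} ∈ A := hPmem.resolve_left (by omega)
          have hcrossPM : Cross N {V p, V m} {V x, V y} :=
            ⟨V p, V m, V x, V y, rfl, rfl,
              (harc p x m hpN hxN hmN).mpr (by omega),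
              (harc m y p hmN hyN hpN).mpr (by omega)⟩
          have hconc := hA.2 (V p) (V m) (V x) (V y) hpmA haxy hcrossPM
            (V m) (by simp) (V y) (by simp)
            ((hdiagV m y hmN hyN (by omega)).mpr ⟨by omega, by omega⟩)
          have := hQmax y (by omega) hyN hconc
          omega
        · subst hxm
          have := hQmax y (by omega) hyN haxy
          omega
        · have hmqA : {V m, V q} ∈ A := hQmem.resolve_left (by omega)
          have hcrossMQ : Cross N {V m, V q} {V x, V y} :=
            ⟨V m, V q, V x, V y, rfl, rfl,
              (harc m x q hmN hxN hqN').mpr (by omega),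
              (harc q y m hqN' hyN hmN).mpr (by omega)⟩
          have hconc := hA.2 (V m) (V q) (V x) (V y) hmqA haxy hcrossMQ
            (V m) (by simp) (V y) (by simp)
            ((hdiagV m y hmN hyN (by omega)).mpr ⟨by omega, by omega⟩)
          have := hQmax y (by omega) hyN hconc
          omega
      have scen2 : x < p → p < y → y < q → False := by
        intro h1 h2 h3
        rcases lt_trichotomy y m with hym | hym | hym
        · have hpmA : {V p, V m} ∈ A := hPmem.resolve_left (by omega)
          have hcross2 : Cross N {V x, V y} {V p, V m} :=
            ⟨V x, V y, V p, V m, rfl, rfl,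
              (harc x p y hxN hpN hyN).mpr (by omega),
              (harc y m x hyN hmN hxN).mpr (by omega)⟩
          rcases Nat.eq_zero_or_pos x with rfl | hx0
          · have hconc := hA.2 (V 0) (V y) (V p) (V m) haxy hpmA hcross2
              (V 0) (by simp) (V m) (by simp) hdDiagV
            exact hdA (by rwa [hdVV])
          · have hconc := hA.2 (V x) (V y) (V p) (V m) haxy hpmA hcross2
              (V x) (by simp) (V m) (by simp)
              ((hdiagV x m hxN hmN (by omega)).mpr ⟨by omega, by omega⟩)
            have := hPmin x hx0 (by omega) hconc
            omega
        · subst hym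
          rcases Nat.eq_zero_or_pos x with rfl | hx0
          · exact hdA (by rwa [hdVV])
          · have := hPmin x hx0 (by omega) haxy
            omega
        · have hmqA : {V m, V q} ∈ A := hQmem.resolve_left (by omega)
          have haxy' : {V y, V x} ∈ A := by rwa [Finset.pair_comm] at haxy
          have hcross3 : Cross N {V m, V q} {V y, V x} :=
            ⟨V m, V q, V y, V x, rfl, rfl,
              (harc m y q hmN hyN hqN').mpr (by omega),
              (harc q x m hqN' hxN hmN).mpr (by omega)⟩
          rcases Nat.eq_zero_or_pos x with rfl | hx0
          · have hconc := hA.2 (V m) (V q) (V y) (V 0) hmqA haxy' hcross3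
              (V m) (by simp) (V 0) (by simp)
              (by rw [Finset.pair_comm]; exact hdDiagV)
            exact hdA (by rw [hdVV, Finset.pair_comm]; exact hconc)
          · have hconc := hA.2 (V m) (V q) (V y) (V x) hmqA haxy' hcross3
              (V m) (by simp) (V x) (by simp)
              (by rw [Finset.pair_comm]
                  exact (hdiagV x m hxN hmN (by omega)).mpr ⟨by omega, by omega⟩)
            have := hPmin x hx0 (by omega) (by rwa [Finset.pair_comm] at hconc)
            omega
      obtain ⟨a₁, a₂, b₁, b₂, h1, h2, h3, h4⟩ := hcr
      rcases pair_eq_cases h1 with ⟨rfl, rfl⟩ | ⟨rfl, rfl⟩ <;>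
        rcases pair_eq_cases h2 with ⟨rfl, rfl⟩ | ⟨rfl, rfl⟩
      · have n3 := (harc p x q hpN hxN hqN').mp h3
        have n4 := (harc q y p hqN' hyN hpN).mp h4
        exact scen1 (by omega) (by omega) (by omega)
      · have n3 := (harc p y q hpN hyN hqN').mp h3
        have n4 := (harc q x p hqN' hxN hpN).mp h4
        exact scen2 (by omega) (by omega) (by omega)
      · have n3 := (harc q x p hqN' hxN hpN).mp h3
        have n4 := (harc p y q hpN hyN hqN').mp h4
        exact scen2 (by omega) (by omega) (by omega)
      · have n3 := (harc q y p hqN' hyN hpN).mp h3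
        have n4 := (harc p x q hpN hxN hqN').mp h4
        exact scen1 (by omega) (by omega) (by omega)
    -- e := {V p, V q} is in nc A
    have he_mem : {V p, V q} ∈ nc N A := by
      refine ⟨heDiag, ?_⟩
      intro a haA hcr
      obtain ⟨u', v', huv', ha'⟩ := Finset.card_eq_two.mp (hA.1 a haA).1
      set x0 := (u' - u).val with hx0def
      set y0 := (v' - u).val with hy0def
      have hux : V x0 = u' := by
        simp only [hV, hx0def]
        rw [ZMod.natCast_val, ZMod.cast_id]
        ring
      have hvy : V y0 = v' := by
        simp only [hV, hy0def]
        rw [ZMod.natCast_val, ZMod.cast_id]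
        ring
      have hx0N : x0 < N := ZMod.val_lt _
      have hy0N : y0 < N := ZMod.val_lt _
      rw [ha', ← hux, ← hvy] at hcr haA
      rcases lt_trichotomy x0 y0 with h | h | h
      · exact claim x0 y0 h hy0N haA hcr
      · exact huv' (by rw [← hux, ← hvy, h])
      · rw [Finset.pair_comm (V x0) (V y0)] at hcr haA
        exact claim y0 x0 h hx0N haA hcr
    exact hdnc {V p, V q} he_mem
      ⟨V 0, V m, V p, V q, hdVV, rfl,
        (harc 0 p m (by omega) hpN hmN).mpr (by omega),
        (harc m q 0 hmN hqN' (by omega)).mpr (by omega)⟩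
  · intro hdA
    refine ⟨hA.1 d hdA, ?_⟩
    rintro e ⟨heDiag, henc⟩ hc
    exact henc d hdA (cross_symm hc)
end

section
/- Let N ≥ 3 and let A be a set of diagonals of the N-gon satisfying nc(nc A) = A. Then A is a Ptolemy diagram. -/
lemma val_sub' {N : ℕ} [NeZero N] (x y : ZMod N) :
    (x - y).val = if y.val ≤ x.val then x.val - y.val else x.val + N - y.val := by
  have hx := ZMod.val_lt x
  have hy := ZMod.val_lt y
  have hkey : (x - y) = ((x.val + (N - y.val) : ℕ) : ZMod N) := by
    push_cast [Nat.cast_sub hy.le]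
    simp [ZMod.natCast_val, ZMod.cast_id, ZMod.natCast_self]
    ring
  rw [hkey, ZMod.val_natCast]
  split
  · have h2 : x.val + (N - y.val) = (x.val - y.val) + N := by omega
    rw [h2, Nat.add_mod_right, Nat.mod_eq_of_lt (by omega)]
  · rw [Nat.mod_eq_of_lt (by omega)]
    omega

lemma arcBtw_sub {N : ℕ} (a c b t : ZMod N) :
    ArcBtw N (a - t) (c - t) (b - t) ↔ ArcBtw N a c b := by
  simp [ArcBtw, sub_sub_sub_cancel_right]

/-- Rotating a crossing configuration. -/
lemma rot {N : ℕ} [NeZero N] {a₁ b₁ a₂ b₂ : ZMod N}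
    (h1 : ArcBtw N a₁ b₁ a₂) (h2 : ArcBtw N a₂ b₂ a₁) :
    ArcBtw N b₁ a₂ b₂ ∧ ArcBtw N b₂ a₁ b₁ := by
  have := ZMod.val_lt a₁
  have := ZMod.val_lt b₁
  have := ZMod.val_lt a₂
  have := ZMod.val_lt b₂
  simp only [ArcBtw, val_sub'] at *
  split_ifs at * <;> omega

set_option maxHeartbeats 1000000 in
lemma core0 {N : ℕ} [NeZero N] {p2 q1 q2 u v : ZMod N}
    (h1 : ArcBtw N 0 q1 p2) (h2 : ArcBtw N p2 q2 0)
    (h3 : ArcBtw N 0 u q1) (h4 : ArcBtw N q1 v 0) :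
    (ArcBtw N 0 u p2 ∧ ArcBtw N p2 v 0) ∨ (ArcBtw N q1 v q2 ∧ ArcBtw N q2 u q1) := by
  have := ZMod.val_lt p2
  have := ZMod.val_lt q1
  have := ZMod.val_lt q2
  have := ZMod.val_lt u
  have := ZMod.val_lt v
  simp only [ArcBtw, val_sub', sub_zero, ZMod.val_zero] at *
  split_ifs at * <;> omega

lemma core {N : ℕ} [NeZero N] {P₁ P₂ Q₁ Q₂ u v : ZMod N}
    (h1 : ArcBtw N P₁ Q₁ P₂) (h2 : ArcBtw N P₂ Q₂ P₁)
    (h3 : ArcBtw N P₁ u Q₁) (h4 : ArcBtw N Q₁ v P₁) :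
    (ArcBtw N P₁ u P₂ ∧ ArcBtw N P₂ v P₁) ∨ (ArcBtw N Q₁ v Q₂ ∧ ArcBtw N Q₂ u Q₁) := by
  have e0 : P₁ - P₁ = 0 := sub_self P₁
  have h1' : ArcBtw N 0 (Q₁ - P₁) (P₂ - P₁) := by rw [← e0]; exact (arcBtw_sub _ _ _ _).mpr h1
  have h2' : ArcBtw N (P₂ - P₁) (Q₂ - P₁) 0 := by rw [← e0]; exact (arcBtw_sub _ _ _ _).mpr h2
  have h3' : ArcBtw N 0 (u - P₁) (Q₁ - P₁) := by rw [← e0]; exact (arcBtw_sub _ _ _ _).mpr h3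
  have h4' : ArcBtw N (Q₁ - P₁) (v - P₁) 0 := by rw [← e0]; exact (arcBtw_sub _ _ _ _).mpr h4
  rcases core0 h1' h2' h3' h4' with ⟨c1, c2⟩ | ⟨c1, c2⟩
  · rw [← e0] at c1 c2
    exact Or.inl ⟨(arcBtw_sub _ _ _ _).mp c1, (arcBtw_sub _ _ _ _).mp c2⟩
  · exact Or.inr ⟨(arcBtw_sub _ _ _ _).mp c1, (arcBtw_sub _ _ _ _).mp c2⟩

/-- From a pair of arcs separating `u, v` by `x, y` we get a crossing of `{u,v}` with `{x,y}`. -/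
lemma cross_flip {N : ℕ} [NeZero N] {x y u v : ZMod N}
    (h1 : ArcBtw N x u y) (h2 : ArcBtw N y v x) : Cross N {u, v} {x, y} := by
  obtain ⟨g1, g2⟩ := rot h1 h2
  exact ⟨u, v, y, x, rfl, Finset.pair_comm x y, g1, g2⟩

lemma master {N : ℕ} [NeZero N] {x₁ x₂ y₁ y₂ u v i j : ZMod N}
    (h1 : ArcBtw N x₁ y₁ x₂) (h2 : ArcBtw N x₂ y₂ x₁)
    (hi : i = x₁ ∨ i = x₂) (hj : j = y₁ ∨ j = y₂)
    (hcu : ArcBtw N i u j) (hcv : ArcBtw N j v i) :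
    Cross N {u, v} {x₁, x₂} ∨ Cross N {u, v} {y₁, y₂} := by
  obtain ⟨h3, h4⟩ := rot h1 h2
  rcases hi with hi | hi <;> rcases hj with hj | hj <;> rw [hi, hj] at hcu hcv
  · -- i = x₁, j = y₁, order (x₁, y₁, x₂, y₂)
    rcases core h1 h2 hcu hcv with ⟨c1, c2⟩ | ⟨c1, c2⟩
    · exact Or.inl (cross_flip c1 c2)
    · right
      rw [Finset.pair_comm y₁ y₂]
      exact cross_flip c2 c1
  · -- i = x₁, j = y₂, order (y₂, x₁, y₁, x₂)
    rcases core h4 h3 hcv hcu with ⟨c1, c2⟩ | ⟨c1, c2⟩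
    · exact Or.inr (cross_flip c2 c1)
    · exact Or.inl (cross_flip c1 c2)
  · -- i = x₂, j = y₁, order (y₁, x₂, y₂, x₁)
    rcases core h3 h4 hcv hcu with ⟨c1, c2⟩ | ⟨c1, c2⟩
    · right
      rw [Finset.pair_comm y₁ y₂]
      exact cross_flip c2 c1
    · left
      rw [Finset.pair_comm x₁ x₂]
      exact cross_flip c1 c2
  · -- i = x₂, j = y₂, order (x₂, y₂, x₁, y₁)
    rcases core h2 h1 hcu hcv with ⟨c1, c2⟩ | ⟨c1, c2⟩
    · left
      rw [Finset.pair_comm x₁ x₂]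
      exact cross_flip c1 c2
    · exact Or.inr (cross_flip c2 c1)

lemma pair_cases {N : ℕ} {i j α β : ZMod N} (hne : i ≠ j)
    (heq : ({i, j} : Finset (ZMod N)) = {α, β}) :
    (α = i ∧ β = j) ∨ (α = j ∧ β = i) := by
  have hα : α ∈ ({i, j} : Finset (ZMod N)) := by rw [heq]; simp
  have hβ : β ∈ ({i, j} : Finset (ZMod N)) := by rw [heq]; simp
  have hi : i ∈ ({α, β} : Finset (ZMod N)) := by rw [← heq]; simp
  have hj : j ∈ ({α, β} : Finset (ZMod N)) := by rw [← heq]; simp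
  simp only [Finset.mem_insert, Finset.mem_singleton] at hα hβ hi hj
  rcases hα with rfl | rfl <;> rcases hβ with h | h <;> tauto

/-- If `A` is a set of diagonals of the `N`-gon (`N ≥ 3`) with `nc (nc A) = A`,
then `A` is a Ptolemy diagram. -/
theorem isPtolemy_of_nc_nc {N : ℕ} (hN : 3 ≤ N)
    (A : Set (Finset (ZMod N))) (hdiag : ∀ d ∈ A, IsDiag N d)
    (h : nc N (nc N A) = A) :
    IsPtolemy N A := by
  haveI : NeZero N := ⟨by omega⟩
  refine ⟨hdiag, ?_⟩
  intro a₁ a₂ b₁ b₂ ha hb hcr i hi j hj hd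
  rw [← h]
  refine ⟨hd, ?_⟩
  intro e he hce
  obtain ⟨hediag, hnc⟩ := he
  obtain ⟨x₁, x₂, y₁, y₂, hxa, hyb, hx1, hx2⟩ := hcr
  rw [hxa] at hi ha
  rw [hyb] at hj hb
  simp only [Finset.mem_insert, Finset.mem_singleton] at hi hj
  obtain ⟨α, β, u, v, hij, heuv, hcu, hcv⟩ := hce
  have hne : i ≠ j := by
    intro hij'
    subst hij'
    have := hd.1
    simp at this
  rcases pair_cases hne hij with ⟨rfl, rfl⟩ | ⟨rfl, rfl⟩
  · rcases master hx1 hx2 hi hj hcu hcv with hc | hc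
    · exact hnc {x₁, x₂} ha (heuv ▸ hc)
    · exact hnc {y₁, y₂} hb (heuv ▸ hc)
  · rcases master hx1 hx2 hi hj hcv hcu with hc | hc
    · refine hnc {x₁, x₂} ha ?_
      rw [heuv, Finset.pair_comm u v]
      exact hc
    · refine hnc {y₁, y₂} hb ?_
      rw [heuv, Finset.pair_comm u v]
      exact hc
end

section
/- For every integer N ≥ 1, the coefficient of y^{N−1} in the formal power series ((1−y)^N)·((1−2y−y²)⁻¹)^N over ℚ equals Σ_{ℓ≥0} 2^ℓ · binom(N−1+ℓ, ℓ) · binom(2N−2, N−1−2ℓ), where the second binomial coefficient is taken to be 0 whenever N−1−2ℓ < 0, and (1−2y−y²)⁻¹ denotes the multiplicative inverse of 1−2y−y² in ℚ⟦y⟧ (which exists since its constant term is 1). -/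
/-!
Write `Q = 1 - y`, so that `1 - 2y - y² = Q² - 2y²`. Expanding binomially in `t = 2y²/Q²`,
`Q^N (Q² - 2y²)^(-N) = ∑_ℓ C(N-1+ℓ, ℓ) 2^ℓ y^(2ℓ) Q^(-(N+2ℓ))`, and the coefficient of `y^(N-1)`
in `y^(2ℓ) Q^(-(N+2ℓ))` is `C(2N-2, N-1-2ℓ)`. Only the terms with `2ℓ ≤ N-1` matter, so instead of
substituting `t` into a power series we use the truncated identity
`(1-t)^(n+1) ∑_{ℓ ≤ m} C(n+ℓ, ℓ) t^ℓ ≡ 1 (mod t^(m+1))`, valid in any commutative ring.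
-/

open Finset PowerSeries

section TruncatedBinomialSeries

variable {R : Type*} [CommRing R]

theorem one_sub_mul_sum_range_choose_succ (t : R) (n m : ℕ) :
    (1 - t) * ∑ ℓ ∈ range (m + 1), ((n + 1 + ℓ).choose ℓ : R) * t ^ ℓ =
      ∑ ℓ ∈ range (m + 1), ((n + ℓ).choose ℓ : R) * t ^ ℓ
        - ((n + m + 1).choose m : R) * t ^ (m + 1) := by
  induction m with
  | zero => simp
  | succ m ih =>
    have pascal : ((n + m + 2).choose (m + 1) : R) =
        (n + m + 1).choose m + (n + m + 1).choose (m + 1) := by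
      rw [Nat.choose_succ_succ, Nat.cast_add]
    rw [sum_range_succ _ (m + 1), sum_range_succ _ (m + 1),
      show n + 1 + (m + 1) = n + m + 2 by omega, show n + (m + 1) = n + m + 1 by omega]
    linear_combination ih + t ^ (m + 1) * pascal

theorem pow_dvd_one_sub_one_sub_pow_mul_sum_range_choose (t : R) (n m : ℕ) :
    t ^ (m + 1) ∣ 1 - (1 - t) ^ (n + 1) * ∑ ℓ ∈ range (m + 1), ((n + ℓ).choose ℓ : R) * t ^ ℓ := by
  induction n with
  | zero => simp [mul_neg_geom_sum]
  | succ n ih =>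
    obtain ⟨q, hq⟩ := ih
    refine ⟨q + (n + m + 1).choose m * (1 - t) ^ (n + 1), ?_⟩
    rw [pow_succ, mul_assoc, one_sub_mul_sum_range_choose_succ]
    linear_combination hq

/-- `u` and `v` play the roles of `Q⁻¹` and `(Q² - y)⁻¹`. -/
theorem pow_dvd_pow_mul_pow_sub_sum_range_choose {Q u v y : R}
    (hu : Q * u = 1) (hv : (Q ^ 2 - y) * v = 1) (n m : ℕ) :
    y ^ (m + 1) ∣ Q ^ (n + 1) * v ^ (n + 1) -
      ∑ ℓ ∈ range (m + 1), ((n + ℓ).choose ℓ : R) * y ^ ℓ * u ^ (n + 2 * ℓ + 1) := by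
  have hsub : 1 - y * u ^ 2 = (Q ^ 2 - y) * u ^ 2 := by linear_combination (-(Q * u) - 1) * hu
  have htrunc := (pow_dvd_one_sub_one_sub_pow_mul_sum_range_choose (y * u ^ 2) n m).mul_left
    (Q ^ (n + 1) * v ^ (n + 1))
  refine (Dvd.intro _ (mul_pow y (u ^ 2) (m + 1)).symm).trans (htrunc.trans (dvd_of_eq ?_))
  calc Q ^ (n + 1) * v ^ (n + 1) * (1 - (1 - y * u ^ 2) ^ (n + 1) *
        ∑ ℓ ∈ range (m + 1), ((n + ℓ).choose ℓ : R) * (y * u ^ 2) ^ ℓ)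
      = Q ^ (n + 1) * v ^ (n + 1) - ((Q ^ 2 - y) * v) ^ (n + 1) * (Q * u) ^ (n + 1) *
          ∑ ℓ ∈ range (m + 1), u ^ (n + 1) * (((n + ℓ).choose ℓ : R) * (y * u ^ 2) ^ ℓ) := by
        rw [hsub, mul_pow, mul_pow (Q ^ 2 - y) v, mul_pow Q u, ← mul_sum]; ring
    _ = _ := by
        rw [hv, hu, one_pow, one_mul, one_mul]
        congr 1
        refine sum_congr rfl fun ℓ _ ↦ ?_
        ring

end TruncatedBinomialSeries

theorem PowerSeries.inv_one_sub_X_pow_succ_eq_mk_add_choose {k : Type*} [Field k] (d : ℕ) :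
    ((1 - X : k⟦X⟧)⁻¹) ^ (d + 1) = mk fun i ↦ ((d + i).choose d : k) := by
  have hM := mk_add_choose_mul_one_sub_pow_eq_one (S := k) (d := d)
  have hinv : ((1 - X : k⟦X⟧)⁻¹) ^ (d + 1) * (1 - X) ^ (d + 1) = 1 := by
    rw [← mul_pow, PowerSeries.inv_mul_cancel _ (by simp), one_pow]
  linear_combination (mk fun i ↦ ((d + i).choose d : k)) * hinv -
    ((1 - X : k⟦X⟧)⁻¹) ^ (d + 1) * hM

/-- For `N ≥ 1`, the coefficient of `y^(N-1)` in `(1−y)^N · ((1−2y−y²)⁻¹)^N ∈ ℚ⟦y⟧`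
equals `∑_{ℓ ≥ 0} 2^ℓ · C(N−1+ℓ, ℓ) · C(2N−2, N−1−2ℓ)` (the terms with `N−1−2ℓ < 0`
vanish, so the sum is taken over `ℓ ≤ (N-1)/2`). -/
theorem coeff_binomial_sum (N : ℕ) (hN : 1 ≤ N) :
    PowerSeries.coeff (R := ℚ) (N - 1)
        ((1 - PowerSeries.X) ^ N *
          ((1 - 2 * PowerSeries.X - PowerSeries.X ^ 2)⁻¹) ^ N) =
      ∑ ℓ ∈ Finset.range ((N - 1) / 2 + 1),
        (2 : ℚ) ^ ℓ * (Nat.choose (N - 1 + ℓ) ℓ : ℚ) *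
          (Nat.choose (2 * N - 2) (N - 1 - 2 * ℓ) : ℚ) := by
  obtain ⟨n, rfl⟩ : ∃ n, N = n + 1 := ⟨N - 1, by omega⟩
  rw [Nat.add_sub_cancel, show 2 * (n + 1) - 2 = 2 * n by omega]
  have hu : (1 - X) * (1 - X : ℚ⟦X⟧)⁻¹ = 1 := PowerSeries.mul_inv_cancel _ (by simp)
  have hv : ((1 - X) ^ 2 - 2 * X ^ 2) * (1 - 2 * X - X ^ 2 : ℚ⟦X⟧)⁻¹ = 1 := by
    rw [show (1 - X) ^ 2 - 2 * X ^ 2 = (1 - 2 * X - X ^ 2 : ℚ⟦X⟧) by ring]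
    exact PowerSeries.mul_inv_cancel _ (by simp)
  have hX : (X : ℚ⟦X⟧) ^ (n + 1) ∣ (2 * X ^ 2) ^ (n / 2 + 1) :=
    (pow_dvd_pow X (by omega : n + 1 ≤ 2 * (n / 2 + 1))).trans
      ⟨2 ^ (n / 2 + 1), by rw [mul_pow, ← pow_mul, mul_comm]⟩
  have hcoeff := X_pow_dvd_iff.mp
    (hX.trans (pow_dvd_pow_mul_pow_sub_sum_range_choose hu hv n (n / 2))) n (lt_add_one n)
  rw [map_sub, sub_eq_zero, map_sum] at hcoeff
  rw [hcoeff]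
  refine sum_congr rfl fun ℓ hℓ ↦ ?_
  have h2ℓ : 2 * ℓ ≤ n := by rw [mem_range] at hℓ; omega
  calc coeff n (((n + ℓ).choose ℓ : ℚ⟦X⟧) * (2 * X ^ 2) ^ ℓ *
        ((1 - X : ℚ⟦X⟧)⁻¹) ^ (n + 2 * ℓ + 1))
      = coeff n (C ((n + ℓ).choose ℓ * 2 ^ ℓ : ℚ) *
          (X ^ (2 * ℓ) * ((1 - X : ℚ⟦X⟧)⁻¹) ^ (n + 2 * ℓ + 1))) := by
        congr 1
        simp only [map_mul, map_natCast, map_pow, map_ofNat, mul_pow, pow_mul]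
        ring
    _ = _ := by
        rw [coeff_C_mul, coeff_X_pow_mul', if_pos h2ℓ, inv_one_sub_X_pow_succ_eq_mk_add_choose,
          coeff_mk, show n + 2 * ℓ + (n - 2 * ℓ) = 2 * n by omega,
          Nat.choose_symm_of_eq_add (show 2 * n = n + 2 * ℓ + (n - 2 * ℓ) by omega)]
        ring
end

section
/- Let N ≥ 3, let A be a Ptolemy diagram of the N-gon, and let α and β = α + 1 be two neighbouring vertices. Suppose that there exist crossing diagonals a and b in A with α an endpoint of a and β an endpoint of b. Let D be the set of all vertices δ such that each of the two sets {α, δ} and {β, δ} is either an edge of the polygon or a diagonal belonging to A. Then for all δ, δ′ in D ∪ {α, β}: if {δ, δ′} is a diagonal of the polygon, then {δ, δ′} belongs to A. (That is, the vertices of D ∪ {α, β} span a clique of edges and diagonals of A.) -/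
lemma edge_cases {N : ℕ} {x y : ZMod N} (hxy : x ≠ y) (h : IsEdge N {x, y}) :
    y = x + 1 ∨ x = y + 1 := by
  obtain ⟨v, hv⟩ := h
  have hx : x ∈ ({v, v + 1} : Finset (ZMod N)) := hv ▸ (by simp)
  have hy : y ∈ ({v, v + 1} : Finset (ZMod N)) := hv ▸ (by simp)
  simp only [Finset.mem_insert, Finset.mem_singleton] at hx hy
  rcases hx with rfl | rfl <;> rcases hy with rfl | rfl
  · exact absurd rfl hxy
  · exact Or.inl rfl
  · exact Or.inr rfl
  · exact absurd rfl hxy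

lemma key {N : ℕ} (hN : 3 ≤ N) (A : Set (Finset (ZMod N))) (hA : IsPtolemy N A)
    (α β δ δ' : ZMod N) (hβ : β = α + 1)
    (hδ : IsEdge N {α, δ} ∨ ({α, δ} : Finset (ZMod N)) ∈ A)
    (hδ' : IsEdge N {β, δ'} ∨ ({β, δ'} : Finset (ZMod N)) ∈ A)
    (hδα : δ ≠ α) (hδβ : δ ≠ β) (hδ'α : δ' ≠ α) (hδ'β : δ' ≠ β)
    (hpq : (δ - β).val < (δ' - β).val)
    (hdiag : IsDiag N {δ, δ'}) : ({δ, δ'} : Finset (ZMod N)) ∈ A := by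
  haveI : NeZero N := ⟨by omega⟩
  haveI : Fact (1 < N) := ⟨by omega⟩
  set p := (δ - β).val with hp
  set q := (δ' - β).val with hq
  have hcast : ∀ k : ℕ, k ≤ N → ((N - k : ℕ) : ZMod N) = -(k : ZMod N) := by
    intro k hk
    rw [Nat.cast_sub hk, ZMod.natCast_self, zero_sub]
  have hm1 : (-1 : ZMod N).val = N - 1 := by
    have h1 : ((N - 1 : ℕ) : ZMod N) = -1 := by rw [hcast 1 (by omega), Nat.cast_one]
    rw [← h1, ZMod.val_cast_of_lt (by omega)]
  have hm2 : (-2 : ZMod N).val = N - 2 := by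
    have h1 : ((N - 2 : ℕ) : ZMod N) = -2 := by rw [hcast 2 (by omega), Nat.cast_two]
    rw [← h1, ZMod.val_cast_of_lt (by omega)]
  -- basic bounds
  have hp0 : 0 < p := by
    have h0 : p ≠ 0 := fun h => hδβ (sub_eq_zero.mp ((ZMod.val_eq_zero _).mp h))
    omega
  have hqN : q < N := ZMod.val_lt _
  have hq2 : q ≤ N - 2 := by
    have h2 : q ≠ N - 1 := by
      intro h
      apply hδ'α
      have h3 : δ' - β = -1 := ZMod.val_injective N (by rw [← hq, h, hm1])
      rw [hβ] at h3
      linear_combination h3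
    omega
  -- {α, δ} ∈ A
  have hAαδ : ({α, δ} : Finset (ZMod N)) ∈ A := by
    rcases hδ with h | h
    · exfalso
      rcases edge_cases (Ne.symm hδα) h with h1 | h1
      · exact hδβ (h1.trans hβ.symm)
      · have h2 : δ - β = -2 := by rw [hβ]; linear_combination -h1
        have : p = N - 2 := by rw [hp, h2, hm2]
        omega
    · exact h
  -- {β, δ'} ∈ A
  have hAβδ' : ({β, δ'} : Finset (ZMod N)) ∈ A := by
    rcases hδ' with h | h
    · exfalso
      rcases edge_cases (Ne.symm hδ'β) h with h1 | h1
      · have h2 : δ' - β = 1 := by linear_combination h1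
        have : q = 1 := by rw [hq, h2, ZMod.val_one]
        omega
      · exact hδ'α (by linear_combination hβ - h1)
    · exact h
  -- the crossing
  have hsub1 : (δ' - δ).val = q - p := by
    have h1 : δ' - δ = (δ' - β) - (δ - β) := by ring
    rw [h1, ZMod.val_sub (le_of_lt hpq)]
  have hsub2 : (α - δ).val = (N - 1) - p := by
    have h1 : α - δ = (-1 : ZMod N) - (δ - β) := by rw [hβ]; ring
    rw [h1, ZMod.val_sub (by rw [hm1]; omega), hm1]
  have hcross : Cross N {α, δ} {β, δ'} := by
    refine ⟨α, δ, β, δ', rfl, rfl, ⟨?_, ?_⟩, ⟨?_, ?_⟩⟩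
    · have h1 : β - α = 1 := by rw [hβ]; ring
      rw [h1, ZMod.val_one]; omega
    · have h1 : β - α = 1 := by rw [hβ]; ring
      rw [h1, ZMod.val_one]
      have h0 : δ - α ≠ 0 := sub_ne_zero.mpr hδα
      have h0' : (δ - α).val ≠ 0 := fun h => h0 ((ZMod.val_eq_zero _).mp h)
      have h1' : (δ - α).val ≠ 1 := by
        intro h
        apply hδβ
        have : δ - α = 1 := ZMod.val_injective N (by rw [h, ZMod.val_one])
        rw [hβ]; linear_combination this
      omega
    · rw [hsub1]; omega
    · rw [hsub1, hsub2]; omega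
  exact hA.2 α δ β δ' hAαδ hAβδ' hcross δ (by simp) δ' (by simp) hdiag

/-- Let `A` be a Ptolemy diagram of the `N`-gon (`N ≥ 3`), let `α` and `β = α + 1` be
neighbouring vertices, and suppose there are crossing diagonals `a, b ∈ A` with `α` an
endpoint of `a` and `β` an endpoint of `b`. Let `D` be the set of vertices `δ` such
that each of `{α, δ}` and `{β, δ}` is an edge of the polygon or a diagonal of `A`.
Then any two vertices of `D ∪ {α, β}` spanning a diagonal span a diagonal of `A`. -/
theorem clique_of_crossing {N : ℕ} (hN : 3 ≤ N)
    (A : Set (Finset (ZMod N))) (hA : IsPtolemy N A)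
    (α β : ZMod N) (hβ : β = α + 1)
    (a b : Finset (ZMod N)) (ha : a ∈ A) (hb : b ∈ A) (hab : Cross N a b)
    (hαa : α ∈ a) (hβb : β ∈ b)
    (D : Set (ZMod N))
    (hD : D = {δ : ZMod N |
      (IsEdge N {α, δ} ∨ ({α, δ} : Finset (ZMod N)) ∈ A) ∧
      (IsEdge N {β, δ} ∨ ({β, δ} : Finset (ZMod N)) ∈ A)}) :
    ∀ δ ∈ D ∪ {α, β}, ∀ δ' ∈ D ∪ {α, β},
      IsDiag N {δ, δ'} → ({δ, δ'} : Finset (ZMod N)) ∈ A := by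
  haveI : NeZero N := ⟨by omega⟩
  haveI : Fact (1 < N) := ⟨by omega⟩
  subst hD
  intro δ hmem δ' hmem' hdiag
  have hne : δ ≠ δ' := by
    intro h
    rw [h] at hdiag
    simp at hdiag
    exact absurd hdiag.1 (by simp)
  have hvv : ∀ v : ZMod N, v ≠ v + 1 := by
    intro v h
    exact one_ne_zero (left_eq_add.mp h)
  have hcard2 : ∀ s : Finset (ZMod N), (IsEdge N s ∨ s ∈ A) → s.card = 2 := by
    rintro s (⟨v, rfl⟩ | h)
    · exact Finset.card_pair (hvv v)
    · exact (hA.1 s h).1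
  have hDne : ∀ x : ZMod N,
      ((IsEdge N {α, x} ∨ ({α, x} : Finset (ZMod N)) ∈ A) ∧
       (IsEdge N {β, x} ∨ ({β, x} : Finset (ZMod N)) ∈ A)) → x ≠ α ∧ x ≠ β := by
    rintro x ⟨h1, h2⟩
    constructor
    · rintro rfl
      have := hcard2 _ h1
      simp at this
    · rintro rfl
      have := hcard2 _ h2
      simp at this
  simp only [Set.mem_union, Set.mem_insert_iff, Set.mem_singleton_iff,
    Set.mem_setOf_eq] at hmem hmem'
  -- dispatch the cases where one endpoint is α or β
  have hsideα : ∀ x, ((IsEdge N {α, x} ∨ ({α, x} : Finset (ZMod N)) ∈ A) ∧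
      (IsEdge N {β, x} ∨ ({β, x} : Finset (ZMod N)) ∈ A)) →
      IsDiag N {α, x} → ({α, x} : Finset (ZMod N)) ∈ A := by
    rintro x ⟨h1, _⟩ hd
    rcases h1 with h | h
    · exact absurd h hd.2
    · exact h
  have hsideβ : ∀ x, ((IsEdge N {α, x} ∨ ({α, x} : Finset (ZMod N)) ∈ A) ∧
      (IsEdge N {β, x} ∨ ({β, x} : Finset (ZMod N)) ∈ A)) →
      IsDiag N {β, x} → ({β, x} : Finset (ZMod N)) ∈ A := by
    rintro x ⟨_, h2⟩ hd
    rcases h2 with h | h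
    · exact absurd h hd.2
    · exact h
  rcases hmem with hδD | hδα | hδβ
  · rcases hmem' with hδ'D | rfl | rfl
    · -- both in D : the main case
      obtain ⟨hδα, hδβ⟩ := hDne δ hδD
      obtain ⟨hδ'α, hδ'β⟩ := hDne δ' hδ'D
      rcases lt_trichotomy ((δ - β).val) ((δ' - β).val) with h | h | h
      · exact key hN A hA α β δ δ' hβ hδD.1 hδ'D.2 hδα hδβ hδ'α hδ'β h hdiag
      · exfalso
        apply hne
        have : δ - β = δ' - β := ZMod.val_injective N h
        linear_combination this
      · rw [Finset.pair_comm] at hdiag ⊢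
        exact key hN A hA α β δ' δ hβ hδ'D.1 hδD.2 hδ'α hδ'β hδα hδβ h hdiag
    · -- δ' = α
      rw [Finset.pair_comm] at hdiag ⊢
      exact hsideα δ hδD hdiag
    · -- δ' = β
      rw [Finset.pair_comm] at hdiag ⊢
      exact hsideβ δ hδD hdiag
  · subst hδα
    rcases hmem' with hδ'D | rfl | rfl
    · exact hsideα δ' hδ'D hdiag
    · exact absurd rfl hne
    · exact absurd ⟨δ, by rw [hβ]⟩ hdiag.2
  · subst hδβ
    rcases hmem' with hδ'D | rfl | rfl
    · exact hsideβ δ' hδ'D hdiag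
    · exfalso
      apply hdiag.2
      refine ⟨δ', ?_⟩
      rw [Finset.pair_comm, hβ]
    · exact absurd rfl hne
end
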